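/- The string Hamiltonian ℋ = (det H)^{1/2}, with H^{μν} = η^{AB} p_A^μ p_B^ν a 2×2 matrix, satisfies the Noether identity δ^μ_ν ℋ = p^μ_A ∂ℋ/∂p^ν_A (i.e., δ^μ_ν ℋ = (n−1) p^μ_A ∂^A_ν ℋ with n = 2) whenever det H > 0. -/

import Mathlib

/-!
Right-multiplying `p` by `M = 1 + t E_{μν}` turns the Gram matrix `pᵀ η p` into
`Mᵀ (pᵀ η p) M`, so `ℋ (p + t p E_{μν}) = |det M| ℋ p = |1 + t δ_{μν}| ℋ p`.
Differentiating at `t = 0` gives the derivative of `ℋ` at `p` in the direction `p E_{μν}`,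
and that directional derivative is exactly `∑_A p^μ_A ∂ℋ/∂p^ν_A`.
-/

attribute [local instance] Matrix.normedAddCommGroup Matrix.normedSpace

open Matrix Filter Topology

namespace Matrix

variable {m n R : Type*} [CommRing R]

theorem single_eq_vecMulVec [DecidableEq n] (i j : n) (t : R) :
    single i j t = vecMulVec (Pi.single i 1) (Pi.single j t) := by
  ext k l
  simp only [vecMulVec_apply, single_apply, Pi.single_apply, ite_and, eq_comm]
  split_ifs <;> simp

theorem det_one_add_single [Fintype n] [DecidableEq n] (i j : n) (t : R) :
    (1 + single i j t).det = 1 + if i = j then t else 0 := by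
  rw [single_eq_vecMulVec, vecMulVec_eq Unit, det_one_add_replicateCol_mul_replicateRow]
  simp [Pi.single_apply]

theorem mul_single_one_eq_sum_smul_single [Fintype m] [Fintype n] [DecidableEq m] [DecidableEq n]
    (p : Matrix m n R) (μ ν : n) :
    p * single μ ν (1 : R) = ∑ A, p A μ • single A ν (1 : R) := by
  ext A' ρ
  simp [mul_apply, single_apply, Matrix.sum_apply, ite_and]

theorem transpose_mul_mul_self_apply [Fintype m] (η : Matrix m m R) (w : Matrix m n R)
    (μ ν : n) : (wᵀ * η * w) μ ν = ∑ A, ∑ B, η A B * w A μ * w B ν := by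
  simp only [mul_apply, transpose_apply, Finset.sum_mul]
  rw [Finset.sum_comm]
  exact Finset.sum_congr rfl fun _ _ => Finset.sum_congr rfl fun _ _ => by ring

theorem det_gram_mul [Fintype m] [Fintype n] [DecidableEq n] (η : Matrix m m R)
    (w : Matrix m n R) (M : Matrix n n R) :
    ((w * M)ᵀ * η * (w * M)).det = M.det ^ 2 * (wᵀ * η * w).det := by
  rw [transpose_mul, show Mᵀ * wᵀ * η * (w * M) = Mᵀ * (wᵀ * η * w) * M by
    simp only [Matrix.mul_assoc], det_mul, det_mul, det_transpose]
  ring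

end Matrix

section SqrtDetGram

variable {m n : Type*} [Fintype m] [Fintype n] [DecidableEq n]

theorem differentiable_det_gram (η : Matrix m m ℝ) :
    Differentiable ℝ fun w : Matrix m n ℝ => (wᵀ * η * w).det := by
  simp_rw [det_apply, mul_apply, transpose_apply]
  fun_prop

theorem sqrt_det_gram_add_smul_mul_single (η : Matrix m m ℝ) (p : Matrix m n ℝ)
    (hp : 0 ≤ (pᵀ * η * p).det) (μ ν : n) (t : ℝ) :
    √((p + t • (p * single μ ν (1 : ℝ)))ᵀ * η * (p + t • (p * single μ ν (1 : ℝ)))).det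
      = √(pᵀ * η * p).det * |1 + if μ = ν then t else 0| := by
  have hline : p + t • (p * single μ ν (1 : ℝ)) = p * (1 + single μ ν t) := by
    rw [Matrix.mul_add, Matrix.mul_one, ← Matrix.mul_smul, smul_single, smul_eq_mul, mul_one]
  rw [hline, det_gram_mul, det_one_add_single, mul_comm, Real.sqrt_mul hp, Real.sqrt_sq_eq_abs]

theorem fderiv_sqrt_det_gram_mul_single (η : Matrix m m ℝ) (p : Matrix m n ℝ)
    (hpos : 0 < (pᵀ * η * p).det) (μ ν : n) :
    fderiv ℝ (fun w : Matrix m n ℝ => √(wᵀ * η * w).det) p (p * single μ ν (1 : ℝ))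
      = if μ = ν then √(pᵀ * η * p).det else 0 := by
  have hdiff := ((differentiable_det_gram η).differentiableAt (x := p)).sqrt hpos.ne'
  refine hdiff.lineDeriv_eq_fderiv.symm.trans ?_
  rw [lineDeriv]
  simp_rw [sqrt_det_gram_add_smul_mul_single η p hpos.le]
  split_ifs
  · have hnear : (fun t : ℝ => √(pᵀ * η * p).det * |1 + t|) =ᶠ[𝓝 0]
        fun t => √(pᵀ * η * p).det * (1 + t) := by
      filter_upwards [Ioi_mem_nhds (show (-1 : ℝ) < 0 by norm_num)] with t ht
      rw [abs_of_pos (by linarith [Set.mem_Ioi.mp ht])]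
    rw [hnear.deriv_eq]
    simp
  · simp

end SqrtDetGram

theorem string_hamiltonian_noether_general
    {m : ℕ}
    (η : Matrix (Fin m) (Fin m) ℝ)
    (H : Matrix (Fin m) (Fin 2) ℝ → Matrix (Fin 2) (Fin 2) ℝ)
    (hH : ∀ w μ ν, H w μ ν = ∑ A, ∑ B, η A B * w A μ * w B ν)
    (𝓗 : Matrix (Fin m) (Fin 2) ℝ → ℝ)
    (h𝓗 : ∀ w, 𝓗 w = Real.sqrt ((H w).det))
    (p : Matrix (Fin m) (Fin 2) ℝ)
    (hpos : 0 < (H p).det) :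
    ∀ μ ν : Fin 2,
      (if μ = ν then 𝓗 p else 0)
        = ∑ A, p A μ * (fderiv ℝ 𝓗 p) (Matrix.single A ν (1 : ℝ)) := by
  intro μ ν
  have hH_gram : H = fun w => wᵀ * η * w :=
    funext fun w => Matrix.ext fun μ ν => by rw [hH, transpose_mul_mul_self_apply]
  have h𝓗_sqrt : 𝓗 = fun w => √(wᵀ * η * w).det := funext fun w => by rw [h𝓗, hH_gram]
  subst hH_gram h𝓗_sqrt
  simp_rw [← smul_eq_mul, ← map_smul, ← map_sum, ← mul_single_one_eq_sum_smul_single]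
  exact (fderiv_sqrt_det_gram_mul_single η p hpos μ ν).symm

/-- the string Hamiltonian ℋ = (det H)^{1/2}, with
H^{μν} = η^{AB} p_A^μ p_B^ν, satisfies the Noether identity
δ^μ_ν ℋ = p^μ_A ∂ℋ/∂p^ν_A whenever det H > 0. -/
theorem string_hamiltonian_noether
    {m : ℕ}
    (η : Matrix (Fin m) (Fin m) ℝ) (hsymm : η.IsSymm)
    (H : Matrix (Fin m) (Fin 2) ℝ → Matrix (Fin 2) (Fin 2) ℝ)
    (hH : ∀ w μ ν, H w μ ν = ∑ A, ∑ B, η A B * w A μ * w B ν)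
    (𝓗 : Matrix (Fin m) (Fin 2) ℝ → ℝ)
    (h𝓗 : ∀ w, 𝓗 w = Real.sqrt ((H w).det))
    (p : Matrix (Fin m) (Fin 2) ℝ)
    (hpos : 0 < (H p).det) :
    ∀ μ ν : Fin 2,
      (if μ = ν then 𝓗 p else 0)
        = ∑ A, p A μ * (fderiv ℝ 𝓗 p) (Matrix.single A ν (1 : ℝ)) :=
  string_hamiltonian_noether_general η H hH 𝓗 h𝓗 p hpos
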